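/- arXiv:2001.05943 — 6 statements merged into one kernel-verified Lean document; each statement's English description precedes it below -/
import Mathlib

section
/- Let U(y) be the formal power series with non-negative coefficients satisfying U = y(1+U)^2 and U(0)=0, and define S(y) = 2y/(1+y) - y - U(y)^2/(y(1+2U(y))^3) as a formal power series. Then S satisfies the polynomial equation (y^5 + 8y^4 + 25y^3 + 38y^2 + 28y + 8)S^2 + (2y^6 + 12y^5 + 20y^4 + 10y^3 - 5y^2 - 4y + 1)S + (y^7 + 4y^6 - y^5) = 0. -/
open PowerSeries

/-! Clearing the denominator `y(1+y)(1+2U)^3` turns the quadratic equation for `S` into a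
polynomial identity in `y` and `U`, which holds modulo the relation `U = y(1+U)^2`. -/

theorem quadratic_eq_zero_of_mul_eq {R : Type*} [CommRing R] [NoZeroDivisors R]
    {a b c s n d : R} (hd : d ≠ 0) (hs : s * d = n)
    (h : a * n ^ 2 + b * n * d + c * d ^ 2 = 0) : a * s ^ 2 + b * s + c = 0 := by
  have hmul : (a * s ^ 2 + b * s + c) * d ^ 2 = 0 := by rw [← h, ← hs]; ring
  exact (mul_eq_zero.mp hmul).resolve_right (pow_ne_zero 2 hd)

theorem quadratic_relation_of_eq_mul_one_add_sq {R : Type*} [CommRing R] {x u : R}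
    (hu : u = x * (1 + u) ^ 2) :
    (x^5 + 8*x^4 + 25*x^3 + 38*x^2 + 28*x + 8) *
        (2*x * (x * (1 + 2*u)^3) - x * (x * (1 + x) * (1 + 2*u)^3) - (1 + x) * u^2) ^ 2
      + (2*x^6 + 12*x^5 + 20*x^4 + 10*x^3 - 5*x^2 - 4*x + 1) *
        (2*x * (x * (1 + 2*u)^3) - x * (x * (1 + x) * (1 + 2*u)^3) - (1 + x) * u^2) *
        (x * (1 + x) * (1 + 2*u)^3)
      + (x^7 + 4*x^6 - x^5) * (x * (1 + x) * (1 + 2*u)^3) ^ 2 = 0 := by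
  linear_combination
    (8*u^3 - x*u + 2*x*u^2 + 48*x*u^3 - x^2 - 14*x^2*u - 33*x^2*u^2 + 32*x^2*u^3
      - 64*x^2*u^4 - 4*x^3 - 46*x^3*u - 152*x^3*u^2 - 192*x^3*u^3 - 256*x^3*u^4 - 6*x^4
      - 64*x^4*u - 238*x^4*u^2 - 408*x^4*u^3 - 384*x^4*u^4 - 4*x^5 - 41*x^5*u
      - 162*x^5*u^2 - 304*x^5*u^3 - 256*x^5*u^4 - x^6 - 10*x^6*u - 41*x^6*u^2
      - 80*x^6*u^3 - 64*x^6*u^4) * hu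

theorem stmt_0_general (U S : PowerSeries ℚ)
    (hU : U = X * (1 + U)^2)
    (hS : S * (X * (1 + X) * (1 + 2*U)^3) =
      2*X * (X * (1 + 2*U)^3) - X * (X * (1 + X) * (1 + 2*U)^3) - (1 + X) * U^2) :
    (X^5 + 8*X^4 + 25*X^3 + 38*X^2 + 28*X + 8) * S^2
      + (2*X^6 + 12*X^5 + 20*X^4 + 10*X^3 - 5*X^2 - 4*X + 1) * S
      + (X^7 + 4*X^6 - X^5) = 0 := by
  have hU0 : constantCoeff U = 0 := by rw [hU]; simp
  have h1X : (1 + X : ℚ⟦X⟧) ≠ 0 := fun h => by simpa using congrArg constantCoeff h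
  have h12U : (1 + 2*U : ℚ⟦X⟧) ≠ 0 := fun h => by simpa [hU0] using congrArg constantCoeff h
  have hD : (X * (1 + X) * (1 + 2*U)^3 : ℚ⟦X⟧) ≠ 0 :=
    mul_ne_zero (mul_ne_zero X_ne_zero h1X) (pow_ne_zero 3 h12U)
  exact quadratic_eq_zero_of_mul_eq hD hS (quadratic_relation_of_eq_mul_one_add_sq hU)

/-- with `U` the power series satisfying `U = y(1+U)^2`, `U(0)=0`, and
`S = 2y/(1+y) - y - U^2/(y(1+2U)^3)` (stated multiplied out by the invertible-times-`y`
factor `y(1+y)(1+2U)^3`, which determines `S` uniquely since `ℚ⟦y⟧` is a domain),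
`S` satisfies the displayed quadratic equation. -/
theorem stmt_0 (U S : PowerSeries ℚ)
    (hU0 : constantCoeff U = 0)
    (hU : U = X * (1 + U)^2)
    (hS : S * (X * (1 + X) * (1 + 2*U)^3) =
      2*X * (X * (1 + 2*U)^3) - X * (X * (1 + X) * (1 + 2*U)^3) - (1 + X) * U^2) :
    (X^5 + 8*X^4 + 25*X^3 + 38*X^2 + 28*X + 8) * S^2
      + (2*X^6 + 12*X^5 + 20*X^4 + 10*X^3 - 5*X^2 - 4*X + 1) * S
      + (X^7 + 4*X^6 - X^5) = 0 :=
  stmt_0_general U S hU hS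
end

section
/- The quadratic X^2 + ((2y^6 + 12y^5 + 20y^4 + 10y^3 - 5y^2 - 4y + 1)/(y^5 + 8y^4 + 25y^3 + 38y^2 + 28y + 8))·X + (y^7 + 4y^6 - y^5)/(y^5 + 8y^4 + 25y^3 + 38y^2 + 28y + 8) = 0, viewed over the field of formal Laurent series in y, has exactly one solution that is a power series with zero constant term. -/
/-!
The leading coefficient has constant term `8`, so it is a unit and the quadratic may be made
monic. The coefficient of `S` has constant term `1`, so `S = 0` is a simple root modulo `X`;
power series are `X`-adically complete, hence Henselian, which lifts that root to a solution
with zero constant term. Two such solutions `S, T` satisfy `(S - T) * (A * (S + T) + B) = 0`,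
and the second factor is a unit, so `S = T`.
-/

open PowerSeries

namespace PowerSeries

variable {R : Type*} [CommRing R]

theorem quadratic_root_unique {A B C S T : R⟦X⟧} (hB : IsUnit (constantCoeff B))
    (hS₀ : constantCoeff S = 0) (hT₀ : constantCoeff T = 0)
    (hS : A * S ^ 2 + B * S + C = 0) (hT : A * T ^ 2 + B * T + C = 0) : S = T := by
  have hunit : IsUnit (A * (S + T) + B) := by
    rw [isUnit_iff_constantCoeff]
    simpa [hS₀, hT₀] using hB
  have hfactor : (S - T) * (A * (S + T) + B) = 0 := by linear_combination hS - hT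
  exact sub_eq_zero.mp (hunit.mul_left_eq_zero.mp hfactor)

theorem exists_quadratic_root {A B C : R⟦X⟧} (hA : IsUnit (constantCoeff A))
    (hB : IsUnit (constantCoeff B)) (hC : constantCoeff C = 0) :
    ∃ S : R⟦X⟧, constantCoeff S = 0 ∧ A * S ^ 2 + B * S + C = 0 := by
  obtain ⟨A', hAA'⟩ := (isUnit_iff_constantCoeff.mpr hA).exists_right_inv
  let f : Polynomial R⟦X⟧ := .X ^ 2 + (.C (A' * B) * .X + .C (A' * C))
  have hf : f.Monic := Polynomial.monic_X_pow_add Polynomial.degree_linear_lt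
  have hf₀ : f.eval 0 ∈ Ideal.span {X} := by
    simp [f, Ideal.mem_span_singleton, X_dvd_iff, hC]
  have hf'₀ : IsUnit (Ideal.Quotient.mk (Ideal.span {X}) (f.derivative.eval 0)) := by
    have hderiv : f.derivative.eval 0 = A' * B := by simp [f]
    rw [hderiv]
    exact ((IsUnit.of_mul_eq_one_right A hAA').mul
      (isUnit_iff_constantCoeff.mpr hB)).map _
  obtain ⟨S, hroot, hS⟩ := HenselianRing.is_henselian f hf 0 hf₀ hf'₀
  refine ⟨S, by simpa [Ideal.mem_span_singleton, X_dvd_iff] using hS, ?_⟩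
  have hroot' : S ^ 2 + (A' * B * S + A' * C) = 0 := by simpa [f] using hroot
  linear_combination A * hroot' - (B * S + C) * hAA'

theorem existsUnique_quadratic_root {A B C : R⟦X⟧} (hA : IsUnit (constantCoeff A))
    (hB : IsUnit (constantCoeff B)) (hC : constantCoeff C = 0) :
    ∃! S : R⟦X⟧, constantCoeff S = 0 ∧ A * S ^ 2 + B * S + C = 0 := by
  obtain ⟨S, hS₀, hS⟩ := exists_quadratic_root hA hB hC
  exact ⟨S, ⟨hS₀, hS⟩, fun T ⟨hT₀, hT⟩ => quadratic_root_unique hB hT₀ hS₀ hT hS⟩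

end PowerSeries

/-- the quadratic (over Laurent series, equivalently after clearing the
invertible denominator `y^5+8y^4+25y^3+38y^2+28y+8`, whose constant term is `8 ≠ 0`)
has exactly one power-series solution with zero constant term. -/
theorem stmt_2 :
    ∃! S : PowerSeries ℚ,
      constantCoeff S = 0 ∧
      (X^5 + 8*X^4 + 25*X^3 + 38*X^2 + 28*X + 8) * S^2
        + (2*X^6 + 12*X^5 + 20*X^4 + 10*X^3 - 5*X^2 - 4*X + 1) * S
        + (X^7 + 4*X^6 - X^5) = 0 := by
  exact existsUnique_quadratic_root (by simp [map_ofNat]) (by simp) (by simp)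
end

section
/- The polynomial 432x^8 + 448x^7 - 852x^6 + 588x^5 - 72x^4 - 504x^3 + 135x^2 + 108x - 27 has a real root in the open interval (0.242, 0.2421), and this root is its smallest positive real root. -/
/-! The polynomial is negative at 0.242 and positive at 0.2421, so it has a root in between by
the intermediate value theorem. Its derivative is positive on `(0, 1/4)`, so the polynomial is
strictly increasing on `[0, 1/4]` and that root is its only zero there; any other positive root
exceeds `1/4`. -/

open Set Polynomial

theorem exists_zero_mem_Ioo_le_pos_zeros_of_strictMonoOn {f : ℝ → ℝ} {a b c : ℝ}
    (ha : 0 ≤ a) (hab : a ≤ b) (hbc : b ≤ c) (hf : ContinuousOn f (Icc a b))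
    (hmono : StrictMonoOn f (Icc 0 c)) (hfa : f a < 0) (hfb : 0 < f b) :
    ∃ x ∈ Ioo a b, f x = 0 ∧ ∀ y, 0 < y → f y = 0 → x ≤ y := by
  obtain ⟨x, hx, hfx⟩ := intermediate_value_Ioo hab hf ⟨hfa, hfb⟩
  refine ⟨x, hx, hfx, fun y hy hfy => le_of_not_gt fun hyx => ?_⟩
  have hxc : x ∈ Icc 0 c := ⟨ha.trans hx.1.le, hx.2.le.trans hbc⟩
  have := hmono ⟨hy.le, hyx.le.trans hxc.2⟩ hxc hyx
  rw [hfy, hfx] at this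
  exact lt_irrefl 0 this

noncomputable def sigmaPoly : ℝ[X] :=
  432*X^8 + 448*X^7 - 852*X^6 + 588*X^5 - 72*X^4 - 504*X^3 + 135*X^2 + 108*X - 27

theorem eval_sigmaPoly (x : ℝ) : sigmaPoly.eval x =
    432*x^8 + 448*x^7 - 852*x^6 + 588*x^5 - 72*x^4 - 504*x^3 + 135*x^2 + 108*x - 27 := by
  simp [sigmaPoly]

theorem eval_derivative_sigmaPoly (x : ℝ) : sigmaPoly.derivative.eval x =
    3456*x^7 + 3136*x^6 - 5112*x^5 + 2940*x^4 - 288*x^3 - 1512*x^2 + 270*x + 108 := by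
  simp only [sigmaPoly, derivative_sub, derivative_add, derivative_mul, derivative_ofNat, zero_mul,
    derivative_X_pow, derivative_X, eval_add, eval_sub, eval_mul, eval_ofNat, eval_C, eval_pow,
    eval_X, eval_one, eval_zero]
  ring

/-- The negative terms of the derivative total less than `1512/16 + 288/64 + 5112/1024 < 108`. -/
theorem eval_derivative_sigmaPoly_pos {x : ℝ} (h0 : 0 < x) (h1 : x < 1/4) :
    0 < sigmaPoly.derivative.eval x := by
  have h2 : x^2 < 1/16 := by nlinarith
  have h3 : x^3 < 1/64 := by nlinarith
  have h5 : x^5 < 1/1024 := by nlinarith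
  have := pow_pos h0 4
  have := pow_pos h0 6
  have := pow_pos h0 7
  rw [eval_derivative_sigmaPoly]
  linarith

theorem strictMonoOn_eval_sigmaPoly :
    StrictMonoOn (fun x => sigmaPoly.eval x) (Icc 0 (1/4)) := by
  refine strictMonoOn_of_deriv_pos (convex_Icc _ _) sigmaPoly.continuousOn fun x hx => ?_
  rw [interior_Icc] at hx
  rw [Polynomial.deriv]
  exact eval_derivative_sigmaPoly_pos hx.1 hx.2

theorem stmt_4 :
    let p : ℝ → ℝ := fun x =>
      432*x^8 + 448*x^7 - 852*x^6 + 588*x^5 - 72*x^4 - 504*x^3 + 135*x^2 + 108*x - 27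
    ∃ x ∈ Set.Ioo (0.242 : ℝ) 0.2421,
      p x = 0 ∧ ∀ y : ℝ, 0 < y → p y = 0 → x ≤ y := by
  simpa only [eval_sigmaPoly] using
    exists_zero_mem_Ioo_le_pos_zeros_of_strictMonoOn (by norm_num) (by norm_num) (by norm_num)
      sigmaPoly.continuousOn strictMonoOn_eval_sigmaPoly
      (by norm_num [eval_sigmaPoly]) (by norm_num [eval_sigmaPoly])
end

section
/- The polynomial 108x^6 + 4x^5 - 136x^4 + 344x^3 - 425x^2 + 196x - 27 has a real root in the open interval (0.2425, 0.2426), and this root is its smallest positive real root. -/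
private lemma pneg (y : ℝ) (h0 : 0 < y) (h1 : y ≤ 0.2425) :
    108*y^6 + 4*y^5 - 136*y^4 + 344*y^3 - 425*y^2 + 196*y - 27 < 0 := by
  nlinarith [mul_pos h0 h0, sq_nonneg y, sq_nonneg (y-0.2425), mul_pos (mul_pos h0 h0) h0, sq_nonneg (y*(y-0.2425)), mul_nonneg (mul_nonneg h0.le h0.le) (sq_nonneg (y-0.2425)), mul_nonneg (sq_nonneg y) (sq_nonneg (y-0.2425))]

theorem stmt_5 :
    let p : ℝ → ℝ := fun x =>
      108*x^6 + 4*x^5 - 136*x^4 + 344*x^3 - 425*x^2 + 196*x - 27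
    ∃ x ∈ Set.Ioo (0.2425 : ℝ) 0.2426,
      p x = 0 ∧ ∀ y : ℝ, 0 < y → p y = 0 → x ≤ y := by
  intro p
  have hcont : Continuous p := by unfold p; continuity
  have ha : p 0.2425 < 0 := by unfold p; norm_num
  have hb : 0 < p 0.2426 := by unfold p; norm_num
  -- IVT
  obtain ⟨r, hr, hpr⟩ : ∃ r ∈ Set.Icc (0.2425:ℝ) 0.2426, p r = 0 := by
    have := intermediate_value_Icc (by norm_num : (0.2425:ℝ) ≤ 0.2426) hcont.continuousOn
    exact (this ⟨ha.le, hb.le⟩).imp fun x hx => ⟨hx.1, hx.2⟩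
  set S : Set ℝ := {y | 0.2425 ≤ y ∧ p y = 0} with hS
  have hSclosed : IsClosed S := by
    have : S = Set.Ici (0.2425:ℝ) ∩ p ⁻¹' {0} := by ext y; simp [hS, Set.mem_Ici]
    rw [this]
    exact isClosed_Ici.inter (isClosed_singleton.preimage hcont)
  have hSne : S.Nonempty := ⟨r, hr.1, hpr⟩
  have hSbdd : BddBelow S := ⟨0.2425, fun y hy => hy.1⟩
  have hx : sInf S ∈ S := hSclosed.csInf_mem hSne hSbdd
  refine ⟨sInf S, ⟨?_, ?_⟩, hx.2, ?_⟩
  · rcases lt_or_eq_of_le hx.1 with h | h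
    · exact h
    · exact absurd hx.2 (by rw [← h]; exact ha.ne)
  · exact lt_of_le_of_lt (csInf_le hSbdd ⟨hr.1, hpr⟩) (lt_of_le_of_ne hr.2 (by rintro rfl; exact absurd hpr hb.ne'))
  · intro y hy hpy
    by_cases h : 0.2425 ≤ y
    · exact csInf_le hSbdd ⟨h, hpy⟩
    · exact absurd hpy (pneg y hy (le_of_not_ge h)).ne
end

section
/- The polynomial 108x^6 + 4x^5 - 136x^4 + 344x^3 - 425x^2 + 196x - 27 is irreducible over the rationals. -/
open Polynomial

namespace Stmt6Aux

noncomputable def fF : (ZMod 5)[X] :=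
  C 108 * X^6 + C 4 * X^5 - C 136 * X^4 + C 344 * X^3 - C 425 * X^2 + C 196 * X - C 27

instance : Fact (Nat.Prime 5) := ⟨by norm_num⟩

lemma fF_natDegree : fF.natDegree = 6 := by
  unfold fF
  compute_degree!

lemma fF_ne_zero : fF ≠ 0 := fun h => by
  have := fF_natDegree
  rw [h] at this
  simp at this

lemma key1 : ∀ a : ZMod 5,
    ¬ ((-27) + (-196)*a + (-425)*a^2 + (-344)*a^3 + (-136)*a^4 + (-4)*a^5 + 108*a^6 = 0) := by
  decide

lemma key2 : ∀ a b : ZMod 5,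
    ¬ (((-27) + 425*b + (-136)*b^2 + (-108)*b^3 + 344*a*b + (-8)*a*b^2 + 136*a^2*b + 324*a^2*b^2 + 4*a^3*b + (-108)*a^4*b = 0) ∧
       (196 + (-344)*b + 4*b^2 + 425*a + (-272)*a*b + (-324)*a*b^2 + 344*a^2 + (-12)*a^2*b + 136*a^3 + 432*a^3*b + 4*a^4 + (-108)*a^5 = 0)) := by
  decide

lemma key3 : ∀ a b c : ZMod 5,
    ¬ (((-27) + (-344)*c + 108*c^2 + 4*b*c + (-136)*a*c + (-216)*a*b*c + (-4)*a^2*c + 108*a^3*c = 0) ∧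
       (196 + 136*c + (-344)*b + 216*b*c + 4*b^2 + 4*a*c + (-136)*a*b + (-216)*a*b^2 + (-108)*a^2*c + (-4)*a^2*b + 108*a^3*b = 0) ∧
       ((-425) + (-4)*c + 136*b + 108*b^2 + (-344)*a + 216*a*c + 8*a*b + (-136)*a^2 + (-324)*a^2*b + (-4)*a^3 + 108*a^4 = 0)) := by
  decide

lemma eq1 {g : (ZMod 5)[X]} (hm : g.Monic) (hd : g.natDegree = 1) :
    g = X + C (g.coeff 0) := by
  have hc : g.coeff 1 = 1 := hd ▸ hm.coeff_natDegree
  conv_lhs => rw [g.as_sum_range' 2 (by omega)]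
  simp [Finset.sum_range_succ, ← C_mul_X_pow_eq_monomial, hc, add_comm]

lemma eq2 {g : (ZMod 5)[X]} (hm : g.Monic) (hd : g.natDegree = 2) :
    g = X^2 + C (g.coeff 1) * X + C (g.coeff 0) := by
  have hc : g.coeff 2 = 1 := hd ▸ hm.coeff_natDegree
  conv_lhs => rw [g.as_sum_range' 3 (by omega)]
  simp [Finset.sum_range_succ, ← C_mul_X_pow_eq_monomial, hc]
  ring

lemma eq3 {g : (ZMod 5)[X]} (hm : g.Monic) (hd : g.natDegree = 3) :
    g = X^3 + C (g.coeff 2) * X^2 + C (g.coeff 1) * X + C (g.coeff 0) := by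
  have hc : g.coeff 3 = 1 := hd ▸ hm.coeff_natDegree
  conv_lhs => rw [g.as_sum_range' 4 (by omega)]
  simp [Finset.sum_range_succ, ← C_mul_X_pow_eq_monomial, hc]
  ring

lemma coeff_quad (r0 r1 : ZMod 5) (k : ℕ) (h : C r1 * X + C r0 = 0) :
    r0 = 0 ∧ r1 = 0 := by
  constructor
  · have := congrArg (fun p => Polynomial.coeff p 0) h
    simpa using this
  · have := congrArg (fun p => Polynomial.coeff p 1) h
    simpa using this

lemma nodiv1 {g : (ZMod 5)[X]} (hm : g.Monic) (hd : g.natDegree = 1) : ¬ g ∣ fF := by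
  intro hdvd
  set a := g.coeff 0 with ha
  have hg := eq1 hm hd
  set R : (ZMod 5)[X] :=
    C ((-27) + (-196)*a + (-425)*a^2 + (-344)*a^3 + (-136)*a^4 + (-4)*a^5 + 108*a^6) with hR
  set Q : (ZMod 5)[X] :=
    C (196 + 425*a + 344*a^2 + 136*a^3 + 4*a^4 + (-108)*a^5) +
    C ((-425) + (-344)*a + (-136)*a^2 + (-4)*a^3 + 108*a^4) * X +
    C (344 + 136*a + 4*a^2 + (-108)*a^3) * X^2 +
    C ((-136) + (-4)*a + 108*a^2) * X^3 +
    C (4 + (-108)*a) * X^4 + C 108 * X^5 with hQ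
  have hFR : fF = g * Q + R := by
    rw [hg, hQ, hR]
    unfold fF
    simp only [map_add, map_mul, map_pow, map_neg, map_sub, map_ofNat, C_1, map_one]
    push_cast
    ring
  have hgR : g ∣ R := by
    have : R = fF - g * Q := by rw [hFR]; ring
    rw [this]
    exact dvd_sub hdvd (Dvd.intro _ rfl)
  have hRc : R = C ((-27) + (-196)*a + (-425)*a^2 + (-344)*a^3 + (-136)*a^4 + (-4)*a^5 + 108*a^6) := hR
  have hRne : R ≠ 0 := by
    rw [hRc]
    intro h
    exact key1 a (C_eq_zero.mp h)
  have hle := Polynomial.natDegree_le_of_dvd hgR hRne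
  have : R.natDegree = 0 := by rw [hRc]; exact natDegree_C _
  omega

lemma nodiv2 {g : (ZMod 5)[X]} (hm : g.Monic) (hd : g.natDegree = 2) : ¬ g ∣ fF := by
  intro hdvd
  set a := g.coeff 1 with ha
  set b := g.coeff 0 with hb
  have hg := eq2 hm hd
  set r0 := ((-27) + 425*b + (-136)*b^2 + (-108)*b^3 + 344*a*b + (-8)*a*b^2 + 136*a^2*b + 324*a^2*b^2 + 4*a^3*b + (-108)*a^4*b : ZMod 5) with hr0
  set r1 := (196 + (-344)*b + 4*b^2 + 425*a + (-272)*a*b + (-324)*a*b^2 + 344*a^2 + (-12)*a^2*b + 136*a^3 + 432*a^3*b + 4*a^4 + (-108)*a^5 : ZMod 5) with hr1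
  set R : (ZMod 5)[X] := C r1 * X + C r0 with hR
  set Q : (ZMod 5)[X] :=
    C ((-425) + 136*b + 108*b^2 + (-344)*a + 8*a*b + (-136)*a^2 + (-324)*a^2*b + (-4)*a^3 + 108*a^4) +
    C (344 + (-4)*b + 136*a + 216*a*b + 4*a^2 + (-108)*a^3) * X +
    C ((-136) + (-108)*b + (-4)*a + 108*a^2) * X^2 +
    C (4 + (-108)*a) * X^3 + C 108 * X^4 with hQ
  have hFR : fF = g * Q + R := by
    rw [hg, hQ, hR, hr0, hr1]
    unfold fF
    simp only [map_add, map_mul, map_pow, map_neg, map_sub, map_ofNat, C_1, map_one]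
    push_cast
    ring
  have hgR : g ∣ R := by
    have : R = fF - g * Q := by rw [hFR]; ring
    rw [this]
    exact dvd_sub hdvd (Dvd.intro _ rfl)
  have hRne : R ≠ 0 := by
    intro h
    rw [hR] at h
    obtain ⟨h0, h1⟩ := coeff_quad r0 r1 0 h
    exact key2 a b ⟨hr0 ▸ h0, hr1 ▸ h1⟩
  have hle := Polynomial.natDegree_le_of_dvd hgR hRne
  have hRd : R.natDegree ≤ 1 := by
    rw [hR]
    compute_degree
  omega

lemma nodiv3 {g : (ZMod 5)[X]} (hm : g.Monic) (hd : g.natDegree = 3) : ¬ g ∣ fF := by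
  intro hdvd
  set a := g.coeff 2 with ha
  set b := g.coeff 1 with hb
  set c := g.coeff 0 with hc
  have hg := eq3 hm hd
  set r0 := ((-27) + (-344)*c + 108*c^2 + 4*b*c + (-136)*a*c + (-216)*a*b*c + (-4)*a^2*c + 108*a^3*c : ZMod 5) with hr0
  set r1 := (196 + 136*c + (-344)*b + 216*b*c + 4*b^2 + 4*a*c + (-136)*a*b + (-216)*a*b^2 + (-108)*a^2*c + (-4)*a^2*b + 108*a^3*b : ZMod 5) with hr1
  set r2 := ((-425) + (-4)*c + 136*b + 108*b^2 + (-344)*a + 216*a*c + 8*a*b + (-136)*a^2 + (-324)*a^2*b + (-4)*a^3 + 108*a^4 : ZMod 5) with hr2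
  set R : (ZMod 5)[X] := C r2 * X^2 + C r1 * X + C r0 with hR
  set Q : (ZMod 5)[X] :=
    C (344 + (-108)*c + (-4)*b + 136*a + 216*a*b + 4*a^2 + (-108)*a^3) +
    C ((-136) + (-108)*b + (-4)*a + 108*a^2) * X +
    C (4 + (-108)*a) * X^2 + C 108 * X^3 with hQ
  have hFR : fF = g * Q + R := by
    rw [hg, hQ, hR, hr0, hr1, hr2]
    unfold fF
    simp only [map_add, map_mul, map_pow, map_neg, map_sub, map_ofNat, C_1, map_one]
    push_cast
    ring
  have hgR : g ∣ R := by
    have : R = fF - g * Q := by rw [hFR]; ring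
    rw [this]
    exact dvd_sub hdvd (Dvd.intro _ rfl)
  have hRne : R ≠ 0 := by
    intro h
    rw [hR] at h
    have h0 : r0 = 0 := by
      have := congrArg (fun p => Polynomial.coeff p 0) h
      simpa using this
    have h1 : r1 = 0 := by
      have := congrArg (fun p => Polynomial.coeff p 1) h
      simpa using this
    have h2 : r2 = 0 := by
      have := congrArg (fun p => Polynomial.coeff p 2) h
      simpa using this
    exact key3 a b c ⟨h0, h1, h2⟩
  have hle := Polynomial.natDegree_le_of_dvd hgR hRne
  have hRd : R.natDegree ≤ 2 := by
    rw [hR]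
    compute_degree
  omega

lemma nodiv {r : (ZMod 5)[X]} (h0 : r ≠ 0) (h1 : 1 ≤ r.natDegree) (h3 : r.natDegree ≤ 3) :
    ¬ r ∣ fF := by
  intro hdvd
  have hm : (r * C r.leadingCoeff⁻¹).Monic := monic_mul_leadingCoeff_inv h0
  have hdg : (r * C r.leadingCoeff⁻¹).natDegree = r.natDegree :=
    natDegree_mul_leadingCoeff_inv r h0
  have hgr : (r * C r.leadingCoeff⁻¹) ∣ r := by
    refine ⟨C r.leadingCoeff, ?_⟩
    rw [mul_assoc, ← C_mul, inv_mul_cancel₀ (leadingCoeff_ne_zero.mpr h0), C_1, mul_one]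
  have hgF : (r * C r.leadingCoeff⁻¹) ∣ fF := hgr.trans hdvd
  interval_cases hcase : r.natDegree
  · exact nodiv1 hm (by omega) hgF
  · exact nodiv2 hm (by omega) hgF
  · exact nodiv3 hm (by omega) hgF

lemma irrF : Irreducible fF := by
  constructor
  · intro h
    have := Polynomial.natDegree_eq_zero_of_isUnit h
    rw [fF_natDegree] at this
    omega
  · intro p q hpq
    by_contra hcon
    push_neg at hcon
    obtain ⟨hp, hq⟩ := hcon
    have hp0 : p ≠ 0 := by rintro rfl; rw [zero_mul] at hpq; exact fF_ne_zero hpq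
    have hq0 : q ≠ 0 := by rintro rfl; rw [mul_zero] at hpq; exact fF_ne_zero hpq
    have hdp : p.natDegree ≠ 0 := by
      intro h0
      obtain ⟨x, rfl⟩ := Polynomial.natDegree_eq_zero.mp h0
      have hx : x ≠ 0 := fun hx => hp0 (by simp [hx])
      exact hp (isUnit_C.mpr (isUnit_iff_ne_zero.mpr hx))
    have hdq : q.natDegree ≠ 0 := by
      intro h0
      obtain ⟨x, rfl⟩ := Polynomial.natDegree_eq_zero.mp h0
      have hx : x ≠ 0 := fun hx => hq0 (by simp [hx])
      exact hq (isUnit_C.mpr (isUnit_iff_ne_zero.mpr hx))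
    have hsum : p.natDegree + q.natDegree = 6 := by
      rw [← fF_natDegree, hpq, natDegree_mul hp0 hq0]
    rcases le_total p.natDegree q.natDegree with h | h
    · exact nodiv hp0 (by omega) (by omega) ⟨q, hpq⟩
    · exact nodiv hq0 (by omega) (by omega) ⟨p, by rw [hpq]; ring⟩

noncomputable def fZ : ℤ[X] :=
  C 108 * X^6 + C 4 * X^5 - C 136 * X^4 + C 344 * X^3 - C 425 * X^2 + C 196 * X - C 27

lemma fZ_natDegree : fZ.natDegree = 6 := by
  unfold fZ
  compute_degree!

lemma fZ_map : fZ.map (Int.castRingHom (ZMod 5)) = fF := by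
  unfold fZ fF
  simp only [Polynomial.map_add, Polynomial.map_sub, Polynomial.map_mul, Polynomial.map_pow,
    map_C, map_X]
  norm_num

lemma fZ_primitive : fZ.IsPrimitive := by
  intro r hr
  have hdvd := (Polynomial.C_dvd_iff_dvd_coeff r fZ).mp hr
  have h5 : r ∣ 4 := by
    have := hdvd 5
    have hc : fZ.coeff 5 = 4 := by
      unfold fZ
      simp [coeff_add, coeff_sub, coeff_C_mul, coeff_X_pow, coeff_C, coeff_X]
    rwa [hc] at this
  have h0 : r ∣ -27 := by
    have := hdvd 0
    have hc : fZ.coeff 0 = -27 := by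
      unfold fZ
      simp [coeff_add, coeff_sub, coeff_C_mul, coeff_X_pow, coeff_C, coeff_X]
    rwa [hc] at this
  have h1 : r ∣ 1 := by
    have : (1 : ℤ) = 7 * 4 + (-27) := by norm_num
    rw [this]
    exact dvd_add (Dvd.dvd.mul_left h5 7) h0
  exact isUnit_of_dvd_one h1

lemma irrZ : Irreducible fZ := by
  have hFdeg := fF_natDegree
  constructor
  · intro h
    have : IsUnit fF := by
      rw [← fZ_map]
      exact h.map (mapRingHom (Int.castRingHom (ZMod 5)))
    exact irrF.not_isUnit this
  · intro p q hpq
    have hne : fZ ≠ 0 := by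
      intro h
      have := fZ_natDegree
      rw [h] at this
      simp at this
    have hp0 : p ≠ 0 := by rintro rfl; rw [zero_mul] at hpq; exact hne hpq
    have hq0 : q ≠ 0 := by rintro rfl; rw [mul_zero] at hpq; exact hne hpq
    have hsum : p.natDegree + q.natDegree = 6 := by
      rw [← fZ_natDegree, hpq, natDegree_mul hp0 hq0]
    have hmapmul : fF = (p.map (Int.castRingHom (ZMod 5))) * (q.map (Int.castRingHom (ZMod 5))) := by
      rw [← fZ_map, hpq, Polynomial.map_mul]
    have key : ∀ a : ℤ[X], a ∣ fZ → a.natDegree = 0 → IsUnit a := by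
      intro a hadv hdeg
      obtain ⟨x, rfl⟩ := Polynomial.natDegree_eq_zero.mp hdeg
      exact isUnit_C.mpr (fZ_primitive x hadv)
    rcases irrF.isUnit_or_isUnit hmapmul with h | h
    · left
      apply key p ⟨q, hpq⟩
      have hu : (p.map (Int.castRingHom (ZMod 5))).natDegree = 0 :=
        Polynomial.natDegree_eq_zero_of_isUnit h
      have hq5 : (q.map (Int.castRingHom (ZMod 5))).natDegree ≤ q.natDegree :=
        Polynomial.natDegree_map_le
      have hqF : (q.map (Int.castRingHom (ZMod 5))) ≠ 0 := by
        intro hz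
        rw [hz, mul_zero] at hmapmul
        exact fF_ne_zero hmapmul
      have hpF : (p.map (Int.castRingHom (ZMod 5))) ≠ 0 := by
        intro hz
        rw [hz, zero_mul] at hmapmul
        exact fF_ne_zero hmapmul
      have h6 : (p.map (Int.castRingHom (ZMod 5))).natDegree
          + (q.map (Int.castRingHom (ZMod 5))).natDegree = 6 := by
        rw [← hFdeg, hmapmul, natDegree_mul hpF hqF]
      omega
    · right
      apply key q ⟨p, by rw [hpq]; ring⟩
      have hu : (q.map (Int.castRingHom (ZMod 5))).natDegree = 0 :=
        Polynomial.natDegree_eq_zero_of_isUnit h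
      have hp5 : (p.map (Int.castRingHom (ZMod 5))).natDegree ≤ p.natDegree :=
        Polynomial.natDegree_map_le
      have hqF : (q.map (Int.castRingHom (ZMod 5))) ≠ 0 := by
        intro hz
        rw [hz, mul_zero] at hmapmul
        exact fF_ne_zero hmapmul
      have hpF : (p.map (Int.castRingHom (ZMod 5))) ≠ 0 := by
        intro hz
        rw [hz, zero_mul] at hmapmul
        exact fF_ne_zero hmapmul
      have h6 : (p.map (Int.castRingHom (ZMod 5))).natDegree
          + (q.map (Int.castRingHom (ZMod 5))).natDegree = 6 := by
        rw [← hFdeg, hmapmul, natDegree_mul hpF hqF]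
      omega

lemma fZ_map_rat :
    fZ.map (Int.castRingHom ℚ) =
      (108*X^6 + 4*X^5 - 136*X^4 + 344*X^3 - 425*X^2 + 196*X - 27 : ℚ[X]) := by
  unfold fZ
  simp only [Polynomial.map_add, Polynomial.map_sub, Polynomial.map_mul, Polynomial.map_pow,
    map_C, map_X]
  push_cast
  simp only [map_ofNat, map_one]

end Stmt6Aux

open Polynomial in
theorem stmt_6 :
    Irreducible (108*X^6 + 4*X^5 - 136*X^4 + 344*X^3 - 425*X^2 + 196*X - 27 : ℚ[X]) := by
  rw [← Stmt6Aux.fZ_map_rat]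
  exact (Polynomial.IsPrimitive.Int.irreducible_iff_irreducible_map_cast Stmt6Aux.fZ_primitive).mp Stmt6Aux.irrZ
end

section
/- The polynomial 432x^8 + 448x^7 - 852x^6 + 588x^5 - 72x^4 - 504x^3 + 135x^2 + 108x - 27 is irreducible over the rationals. -/
open Polynomial

instance fact11 : Fact (Nat.Prime 11) := ⟨by norm_num⟩
instance fact17 : Fact (Nat.Prime 17) := ⟨by norm_num⟩

noncomputable def fZ : ℤ[X] := 432*X^8 + 448*X^7 - 852*X^6 + 588*X^5 - 72*X^4 - 504*X^3
      + 135*X^2 + 108*X - 27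

lemma fZ_natDegree : fZ.natDegree = 8 := by unfold fZ; compute_degree!

lemma fZ_coeff0 : fZ.coeff 0 = -27 := by
  unfold fZ
  simp [coeff_add, coeff_sub, coeff_ofNat_mul, coeff_X_pow, coeff_X, coeff_ofNat_zero]

lemma fZ_coeff7 : fZ.coeff 7 = 448 := by
  unfold fZ
  simp [coeff_add, coeff_sub, coeff_ofNat_mul, coeff_X_pow, coeff_X, coeff_ofNat_zero]

lemma fZ_coeff8 : fZ.coeff 8 = 432 := by
  unfold fZ
  simp [coeff_add, coeff_sub, coeff_ofNat_mul, coeff_X_pow, coeff_X, coeff_ofNat_zero]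

lemma fZ_leadingCoeff : fZ.leadingCoeff = 432 := by
  rw [Polynomial.leadingCoeff, fZ_natDegree, fZ_coeff8]

lemma fZ_primitive : fZ.IsPrimitive := by
  intro r hr
  rw [Polynomial.C_dvd_iff_dvd_coeff] at hr
  have h0 : r ∣ -27 := fZ_coeff0 ▸ hr 0
  have h7 : r ∣ 448 := fZ_coeff7 ▸ hr 7
  have h1 : r ∣ 1 := by
    have : (1 : ℤ) = (-27) * (-83) + 448 * (-5) := by norm_num
    rw [this]
    exact dvd_add (h0.mul_right _) (h7.mul_right _)
  exact isUnit_of_dvd_one h1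

/-- basic facts about the mod-n reduction of a factor of fZ -/
lemma map_facts {n : ℕ} [NeZero n] (h432 : (432 : ZMod n) ≠ 0) (a b : ℤ[X]) (hab : fZ = a * b) :
    (a.map (Int.castRingHom (ZMod n))).natDegree = a.natDegree ∧
      (a.map (Int.castRingHom (ZMod n))) ≠ 0 := by
  have hlc : a.leadingCoeff * b.leadingCoeff = 432 := by
    rw [← leadingCoeff_mul, ← hab, fZ_leadingCoeff]
  have hcast : ((a.leadingCoeff : ℤ) : ZMod n) ≠ 0 := by
    intro h
    apply h432
    have h2 : ((432 : ℤ) : ZMod n) = (432 : ZMod n) := by push_cast; ring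
    rw [← h2, ← hlc]
    push_cast
    rw [h, zero_mul]
  constructor
  · exact natDegree_map_of_leadingCoeff_ne_zero _ (by simpa using hcast)
  · intro h
    apply hcast
    have h3 := congrArg (fun p => Polynomial.coeff p a.natDegree) h
    simpa [Polynomial.coeff_map] using h3

/-- a monic polynomial of natDegree 2 is X^2 + C c1 X + C c0 -/
lemma quadRep {K : Type} [Field K] (u : K[X]) (hm : u.Monic) (hd : u.natDegree = 2) :
    u = X^2 + C (u.coeff 1) * X + C (u.coeff 0) := by
  have h3 : u.natDegree < 3 := by omega
  have h := u.as_sum_range' 3 h3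
  rw [Finset.sum_range_succ, Finset.sum_range_succ, Finset.sum_range_one] at h
  have h2 : u.coeff 2 = 1 := by
    have hc := hm.coeff_natDegree
    rwa [hd] at hc
  rw [h2] at h
  conv_lhs => rw [h]
  simp only [← C_mul_X_pow_eq_monomial, monomial_zero_left, C_1]
  ring

/-- expansion of a product of two monic quadratics -/
lemma quad_mul_expand {K : Type} [Field K] (a b c d : K) :
    (X^2 + C a * X + C b) * (X^2 + C c * X + C d) =
      X^4 + C (a+c)*X^3 + C (b+d+a*c)*X^2 + C (a*d+b*c)*X + C (b*d) := by
  simp only [C_add, C_mul]; ring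

lemma quartic_no_quad {K : Type} [Field K] (h : K[X]) (hm : h.Monic) (hd : h.natDegree = 4)
    (H : ¬ ∃ a b c d : K, h.coeff 3 = a + c ∧ h.coeff 2 = b + d + a*c ∧
      h.coeff 1 = a*d + b*c ∧ h.coeff 0 = b*d) :
    ∀ a b : K, ¬ ((X^2 + C a * X + C b) ∣ h) := by
  rintro a b ⟨t, ht⟩
  have hq_m : (X^2 + C a * X + C b : K[X]).Monic := by monicity!
  have hq_d : (X^2 + C a * X + C b : K[X]).natDegree = 2 := by compute_degree!
  have ht0 : t ≠ 0 := by rintro rfl; rw [mul_zero] at ht; exact hm.ne_zero ht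
  have htm : t.Monic := by
    have := ht ▸ hm
    exact hq_m.of_mul_monic_left this
  have htd : t.natDegree = 2 := by
    have hmul := natDegree_mul (hq_m.ne_zero) ht0
    rw [← ht, hd, hq_d] at hmul
    omega
  rw [quadRep t htm htd, quad_mul_expand] at ht
  apply H
  refine ⟨a, b, t.coeff 1, t.coeff 0, ?_, ?_, ?_, ?_⟩ <;>
    (rw [ht]; simp only [coeff_add, coeff_C_mul, coeff_X_pow, coeff_C, coeff_X]; norm_num)

/-- irreducibility criterion for quartics over a field -/
lemma quartic_irr {K : Type} [Field K] (h : K[X]) (hm : h.Monic) (hd : h.natDegree = 4)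
    (hroot : ∀ x : K, ¬ h.IsRoot x)
    (H : ¬ ∃ a b c d : K, h.coeff 3 = a + c ∧ h.coeff 2 = b + d + a*c ∧
      h.coeff 1 = a*d + b*c ∧ h.coeff 0 = b*d) : Irreducible h := by
  have hne1 : h ≠ 1 := by
    intro h1
    rw [h1, natDegree_one] at hd
    exact absurd hd (by norm_num)
  rw [hm.irreducible_iff_lt_natDegree_lt hne1]
  intro q hq hdq hdvd
  rw [hd] at hdq
  simp only [Finset.mem_Ioc] at hdq
  norm_num at hdq
  obtain ⟨hdq1, hdq2⟩ := hdq
  interval_cases hqd : q.natDegree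
  · -- degree 1
    rw [hq.eq_X_add_C hqd] at hdvd
    have : (X : K[X]) + C (q.coeff 0) = X - C (-(q.coeff 0)) := by rw [C_neg, sub_neg_eq_add]
    rw [this, dvd_iff_isRoot] at hdvd
    exact hroot _ hdvd
  · -- degree 2
    rw [quadRep q hq hqd] at hdvd
    exact quartic_no_quad h hm hd H _ _ hdvd

/-- irreducibility criterion for quadratics/cubics over a field -/
lemma small_irr {K : Type} [Field K] (q : K[X]) (hm : q.Monic) (h2 : 2 ≤ q.natDegree)
    (h3 : q.natDegree ≤ 3) (hr : ∀ x : K, ¬ q.IsRoot x) : Irreducible q := by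
  rw [hm.irreducible_iff_roots_eq_zero_of_degree_le_three h2 h3]
  rw [Multiset.eq_zero_iff_forall_notMem]
  intro x hx
  exact hr x ((mem_roots hm.ne_zero).mp hx)

-- ========== mod 11 data ==========

lemma h1_irr : Irreducible (X^4 + 6*X^3 + 10*X + 9 : (ZMod 11)[X]) := by
  apply quartic_irr _ (by monicity!) (by compute_degree!)
  · intro x hx
    simp only [IsRoot, eval_add, eval_mul, eval_pow, eval_X, eval_ofNat] at hx
    revert hx
    revert x
    decide
  · have hc3 : (X^4 + 6*X^3 + 10*X + 9 : (ZMod 11)[X]).coeff 3 = 6 := by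
      simp [coeff_add, coeff_ofNat_mul, coeff_X_pow, coeff_X, coeff_ofNat_zero]
    have hc2 : (X^4 + 6*X^3 + 10*X + 9 : (ZMod 11)[X]).coeff 2 = 0 := by
      simp [coeff_add, coeff_ofNat_mul, coeff_X_pow, coeff_X, coeff_ofNat_zero]
    have hc1 : (X^4 + 6*X^3 + 10*X + 9 : (ZMod 11)[X]).coeff 1 = 10 := by
      simp [coeff_add, coeff_ofNat_mul, coeff_X_pow, coeff_X, coeff_ofNat_zero]
    have hc0 : (X^4 + 6*X^3 + 10*X + 9 : (ZMod 11)[X]).coeff 0 = 9 := by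
      simp [coeff_add, coeff_ofNat_mul, coeff_X_pow, coeff_X, coeff_ofNat_zero]
    rw [hc3, hc2, hc1, hc0]
    decide

lemma h2_irr : Irreducible (X^4 + 4*X^3 + 10*X + 10 : (ZMod 11)[X]) := by
  apply quartic_irr _ (by monicity!) (by compute_degree!)
  · intro x hx
    simp only [IsRoot, eval_add, eval_mul, eval_pow, eval_X, eval_ofNat] at hx
    revert hx
    revert x
    decide
  · have hc3 : (X^4 + 4*X^3 + 10*X + 10 : (ZMod 11)[X]).coeff 3 = 4 := by
      simp [coeff_add, coeff_ofNat_mul, coeff_X_pow, coeff_X, coeff_ofNat_zero]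
    have hc2 : (X^4 + 4*X^3 + 10*X + 10 : (ZMod 11)[X]).coeff 2 = 0 := by
      simp [coeff_add, coeff_ofNat_mul, coeff_X_pow, coeff_X, coeff_ofNat_zero]
    have hc1 : (X^4 + 4*X^3 + 10*X + 10 : (ZMod 11)[X]).coeff 1 = 10 := by
      simp [coeff_add, coeff_ofNat_mul, coeff_X_pow, coeff_X, coeff_ofNat_zero]
    have hc0 : (X^4 + 4*X^3 + 10*X + 10 : (ZMod 11)[X]).coeff 0 = 10 := by
      simp [coeff_add, coeff_ofNat_mul, coeff_X_pow, coeff_X, coeff_ofNat_zero]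
    rw [hc3, hc2, hc1, hc0]
    decide

lemma eleven_zero : (11 : (ZMod 11)[X]) = 0 := by
  have h : ((11:ℕ) : (ZMod 11)[X]) = C ((11:ℕ) : ZMod 11) := (Polynomial.C_eq_natCast _).symm
  have h2 : ((11:ℕ) : ZMod 11) = 0 := by decide
  rw [h2] at h
  norm_num at h
  exact h

lemma fZ_mod11 : fZ.map (Int.castRingHom (ZMod 11)) =
    3 * (X^4 + 6*X^3 + 10*X + 9) * (X^4 + 4*X^3 + 10*X + 10) := by
  unfold fZ
  simp only [Polynomial.map_add, Polynomial.map_sub, Polynomial.map_mul, Polynomial.map_pow,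
    Polynomial.map_X, Polynomial.map_ofNat]
  have key : (432*X^8 + 448*X^7 - 852*X^6 + 588*X^5 - 72*X^4 - 504*X^3
      + 135*X^2 + 108*X - 27 : (ZMod 11)[X]) =
      3 * (X^4 + 6*X^3 + 10*X + 9) * (X^4 + 4*X^3 + 10*X + 10)
      + 11 * (39*X^8 + 38*X^7 - 84*X^6 + 48*X^5 - 39*X^4 - 72*X^3 - 15*X^2 - 42*X - 27) := by
    ring
  rw [key, eleven_zero, zero_mul, add_zero]

/-- no factor of fZ has natDegree in [1,3] -/
lemma L11 (a b : ℤ[X]) (hab : fZ = a * b) (hd1 : 1 ≤ a.natDegree) (hd3 : a.natDegree ≤ 3) :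
    False := by
  obtain ⟨hAdeg, hA0⟩ := map_facts (n := 11) (by decide) a b hab
  set A := a.map (Int.castRingHom (ZMod 11)) with hA
  obtain ⟨s, hs_irr, hs_dvd⟩ := exists_irreducible_of_natDegree_pos (f := A) (by omega)
  have hsG : s ∣ 3 * (X^4 + 6*X^3 + 10*X + 9) * (X^4 + 4*X^3 + 10*X + 10) := by
    rw [← fZ_mod11, hab, Polynomial.map_mul]
    exact hs_dvd.trans (Dvd.intro _ rfl)
  have hsp : Prime s := UniqueFactorizationMonoid.irreducible_iff_prime.mp hs_irr
  have hsmall : s.natDegree ≤ 3 := by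
    have hle := natDegree_le_of_dvd hs_dvd hA0
    rw [hAdeg] at hle
    omega
  have hbig : 4 ≤ s.natDegree := by
    rcases (hsp.dvd_mul.mp hsG) with h | h
    · rcases (hsp.dvd_mul.mp h) with h' | h'
      · exfalso
        have hu : IsUnit (3 : (ZMod 11)[X]) := by
          have h3 : IsUnit (3 : ZMod 11) := isUnit_iff_ne_zero.mpr (by decide)
          have := h3.map (C : ZMod 11 →+* (ZMod 11)[X])
          rwa [map_ofNat] at this
        exact hs_irr.not_isUnit (isUnit_of_dvd_unit h' hu)
      · have hass := (hs_irr.dvd_irreducible_iff_associated h1_irr).mp h'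
        have := natDegree_le_of_dvd hass.symm.dvd hs_irr.ne_zero
        have hd : (X^4 + 6*X^3 + 10*X + 9 : (ZMod 11)[X]).natDegree = 4 := by compute_degree!
        omega
    · have hass := (hs_irr.dvd_irreducible_iff_associated h2_irr).mp h
      have := natDegree_le_of_dvd hass.symm.dvd hs_irr.ne_zero
      have hd : (X^4 + 4*X^3 + 10*X + 10 : (ZMod 11)[X]).natDegree = 4 := by compute_degree!
      omega
  omega

-- ========== mod 17 data ==========

lemma seventeen_zero : (17 : (ZMod 17)[X]) = 0 := by
  have h : ((17:ℕ) : (ZMod 17)[X]) = C ((17:ℕ) : ZMod 17) := (Polynomial.C_eq_natCast _).symm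
  have h2 : ((17:ℕ) : ZMod 17) = 0 := by decide
  rw [h2] at h
  norm_num at h
  exact h

lemma fZ_mod17 : fZ.map (Int.castRingHom (ZMod 17)) =
    7 * ((X^2 + 2*X + 6) * ((X^3 + 5*X^2 + 7*X + 8) * (X^3 + 6*X^2 + 10*X + 11))) := by
  unfold fZ
  simp only [Polynomial.map_add, Polynomial.map_sub, Polynomial.map_mul, Polynomial.map_pow,
    Polynomial.map_X, Polynomial.map_ofNat]
  have key : (432*X^8 + 448*X^7 - 852*X^6 + 588*X^5 - 72*X^4 - 504*X^3
      + 135*X^2 + 108*X - 27 : (ZMod 17)[X]) =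
      7 * ((X^2 + 2*X + 6) * ((X^3 + 5*X^2 + 7*X + 8) * (X^3 + 6*X^2 + 10*X + 11)))
      + 17 * (25*X^8 + 21*X^7 - 81*X^6 - 77*X^5 - 283*X^4 - 511*X^3 - 585*X^2 - 454*X - 219) := by
    ring
  rw [key, seventeen_zero, zero_mul, add_zero]

lemma q2_monic : (X^2 + 2*X + 6 : (ZMod 17)[X]).Monic := by monicity!
lemma q3_monic : (X^3 + 5*X^2 + 7*X + 8 : (ZMod 17)[X]).Monic := by monicity!
lemma q3'_monic : (X^3 + 6*X^2 + 10*X + 11 : (ZMod 17)[X]).Monic := by monicity!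
lemma q2_deg : (X^2 + 2*X + 6 : (ZMod 17)[X]).natDegree = 2 := by compute_degree!
lemma q3_deg : (X^3 + 5*X^2 + 7*X + 8 : (ZMod 17)[X]).natDegree = 3 := by compute_degree!
lemma q3'_deg : (X^3 + 6*X^2 + 10*X + 11 : (ZMod 17)[X]).natDegree = 3 := by compute_degree!

lemma q2_irr : Irreducible (X^2 + 2*X + 6 : (ZMod 17)[X]) := by
  apply small_irr _ q2_monic (by rw [q2_deg]) (by rw [q2_deg]; norm_num)
  intro x hx
  simp only [IsRoot, eval_add, eval_mul, eval_pow, eval_X, eval_ofNat] at hx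
  revert hx
  revert x
  decide

lemma q3_irr : Irreducible (X^3 + 5*X^2 + 7*X + 8 : (ZMod 17)[X]) := by
  apply small_irr _ q3_monic (by rw [q3_deg]; norm_num) (by rw [q3_deg])
  intro x hx
  simp only [IsRoot, eval_add, eval_mul, eval_pow, eval_X, eval_ofNat] at hx
  revert hx
  revert x
  decide

lemma q3'_irr : Irreducible (X^3 + 6*X^2 + 10*X + 11 : (ZMod 17)[X]) := by
  apply small_irr _ q3'_monic (by rw [q3'_deg]; norm_num) (by rw [q3'_deg])
  intro x hx
  simp only [IsRoot, eval_add, eval_mul, eval_pow, eval_X, eval_ofNat] at hx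
  revert hx
  revert x
  decide

/-- two distinct-ish irreducible monic factors, one cubic, in a quartic: impossible -/
lemma H1 {K : Type} [Field K] (u v A : K[X]) (hui : Irreducible u) (hum : u.Monic)
    (hu3 : u.natDegree = 3) (hvi : Irreducible v) (hvm : v.Monic) (hv2 : 2 ≤ v.natDegree)
    (hvu : v ≠ u) (hA : A ≠ 0) (hA4 : A.natDegree = 4)
    (hud : u ∣ A) (hvd : v ∣ A) : False := by
  obtain ⟨r, hr⟩ := hud
  have hr0 : r ≠ 0 := by rintro rfl; rw [mul_zero] at hr; exact hA hr
  have hrd : r.natDegree = 1 := by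
    have hm := natDegree_mul hui.ne_zero hr0
    rw [← hr, hA4, hu3] at hm
    omega
  have hvp : Prime v := UniqueFactorizationMonoid.irreducible_iff_prime.mp hvi
  rw [hr] at hvd
  rcases hvp.dvd_mul.mp hvd with h | h
  · have hass := (hvi.dvd_irreducible_iff_associated hui).mp h
    exact hvu (eq_of_monic_of_associated hvm hum hass)
  · have := natDegree_le_of_dvd h hr0
    omega

lemma q3_ne_q3' : (X^3 + 6*X^2 + 10*X + 11 : (ZMod 17)[X]) ≠ X^3 + 5*X^2 + 7*X + 8 := by
  intro h
  have h0 := congrArg (eval 0) h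
  simp only [eval_add, eval_mul, eval_pow, eval_X, eval_ofNat] at h0
  norm_num at h0
  revert h0
  decide

lemma q2_ne_q3 : (X^2 + 2*X + 6 : (ZMod 17)[X]) ≠ X^3 + 5*X^2 + 7*X + 8 := by
  intro h
  have := congrArg natDegree h
  rw [q2_deg, q3_deg] at this
  omega

lemma q2_ne_q3' : (X^2 + 2*X + 6 : (ZMod 17)[X]) ≠ X^3 + 6*X^2 + 10*X + 11 := by
  intro h
  have := congrArg natDegree h
  rw [q2_deg, q3'_deg] at this
  omega

/-- no factor of fZ has natDegree 4 -/
lemma L17 (a b : ℤ[X]) (hab : fZ = a * b) (ha4 : a.natDegree = 4) (hb4 : b.natDegree = 4) :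
    False := by
  obtain ⟨hAdeg, hA0⟩ := map_facts (n := 17) (by decide) a b hab
  obtain ⟨hBdeg, hB0⟩ := map_facts (n := 17) (by decide) b a (by rw [hab, mul_comm])
  set A := a.map (Int.castRingHom (ZMod 17)) with hA
  set B := b.map (Int.castRingHom (ZMod 17)) with hB
  have hABG : A * B = 7 * ((X^2 + 2*X + 6) * ((X^3 + 5*X^2 + 7*X + 8)
      * (X^3 + 6*X^2 + 10*X + 11))) := by
    rw [← fZ_mod17, hab, Polynomial.map_mul]
  have hu7 : IsUnit (7 : (ZMod 17)[X]) := by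
    have h7 : IsUnit (7 : ZMod 17) := isUnit_iff_ne_zero.mpr (by decide)
    have := h7.map (C : ZMod 17 →+* (ZMod 17)[X])
    rwa [map_ofNat] at this
  have hq3p : Prime (X^3 + 5*X^2 + 7*X + 8 : (ZMod 17)[X]) :=
    UniqueFactorizationMonoid.irreducible_iff_prime.mp q3_irr
  have hq3'p : Prime (X^3 + 6*X^2 + 10*X + 11 : (ZMod 17)[X]) :=
    UniqueFactorizationMonoid.irreducible_iff_prime.mp q3'_irr
  have hq2p : Prime (X^2 + 2*X + 6 : (ZMod 17)[X]) :=
    UniqueFactorizationMonoid.irreducible_iff_prime.mp q2_irr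
  have hq3_dvd : (X^3 + 5*X^2 + 7*X + 8 : (ZMod 17)[X]) ∣ A * B := by
    rw [hABG]
    exact (dvd_mul_right _ _).mul_left _ |>.mul_left _
  have hq3'_dvd : (X^3 + 6*X^2 + 10*X + 11 : (ZMod 17)[X]) ∣ A * B := by
    rw [hABG]
    exact ((dvd_mul_left _ _).mul_left _).mul_left _
  have hq2_dvd : (X^2 + 2*X + 6 : (ZMod 17)[X]) ∣ A * B := by
    rw [hABG]
    exact (dvd_mul_right _ _).mul_left _
  have hAd : A.natDegree = 4 := by rw [hAdeg, ha4]
  have hBd : B.natDegree = 4 := by rw [hBdeg, hb4]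
  rcases hq3p.dvd_mul.mp hq3_dvd with h3A | h3B <;>
    rcases hq3'p.dvd_mul.mp hq3'_dvd with h3'A | h3'B
  · exact H1 _ _ A q3_irr q3_monic q3_deg q3'_irr q3'_monic (by rw [q3'_deg]; norm_num)
      q3_ne_q3' hA0 hAd h3A h3'A
  · rcases hq2p.dvd_mul.mp hq2_dvd with h2A | h2B
    · exact H1 _ _ A q3_irr q3_monic q3_deg q2_irr q2_monic (by rw [q2_deg])
        q2_ne_q3 hA0 hAd h3A h2A
    · exact H1 _ _ B q3'_irr q3'_monic q3'_deg q2_irr q2_monic (by rw [q2_deg])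
        q2_ne_q3' hB0 hBd h3'B h2B
  · rcases hq2p.dvd_mul.mp hq2_dvd with h2A | h2B
    · exact H1 _ _ A q3'_irr q3'_monic q3'_deg q2_irr q2_monic (by rw [q2_deg])
        q2_ne_q3' hA0 hAd h3'A h2A
    · exact H1 _ _ B q3_irr q3_monic q3_deg q2_irr q2_monic (by rw [q2_deg])
        q2_ne_q3 hB0 hBd h3B h2B
  · exact H1 _ _ B q3_irr q3_monic q3_deg q3'_irr q3'_monic (by rw [q3'_deg]; norm_num)
      q3_ne_q3' hB0 hBd h3B h3'B

lemma fZ_irreducible : Irreducible fZ := by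
  constructor
  · intro h
    have := natDegree_eq_zero_of_isUnit h
    rw [fZ_natDegree] at this
    exact absurd this (by norm_num)
  · intro a b hab
    by_contra hcon
    push_neg at hcon
    obtain ⟨hua, hub⟩ := hcon
    have ha0 : a ≠ 0 := by
      rintro rfl
      rw [zero_mul] at hab
      have := fZ_natDegree
      rw [hab] at this
      simp at this
    have hb0 : b ≠ 0 := by
      rintro rfl
      rw [mul_zero] at hab
      have := fZ_natDegree
      rw [hab] at this
      simp at this
    have hsum : a.natDegree + b.natDegree = 8 := by
      have := fZ_natDegree
      rw [hab, natDegree_mul ha0 hb0] at this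
      exact this
    have ha1 : 1 ≤ a.natDegree := by
      by_contra h
      push_neg at h
      have h0 : a.natDegree = 0 := by omega
      have := fZ_primitive (a.coeff 0) (by rw [← eq_C_of_natDegree_eq_zero h0]; exact ⟨b, hab⟩)
      exact hua (by rw [eq_C_of_natDegree_eq_zero h0]; exact this.map C)
    have hb1 : 1 ≤ b.natDegree := by
      by_contra h
      push_neg at h
      have h0 : b.natDegree = 0 := by omega
      have := fZ_primitive (b.coeff 0)
        (by rw [← eq_C_of_natDegree_eq_zero h0]; exact ⟨a, by rw [hab, mul_comm]⟩)
      exact hub (by rw [eq_C_of_natDegree_eq_zero h0]; exact this.map C)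
    rcases le_or_gt a.natDegree 3 with h | h
    · exact L11 a b hab ha1 h
    · rcases Nat.lt_or_ge a.natDegree 5 with h' | h'
      · exact L17 a b hab (by omega) (by omega)
      · exact L11 b a (by rw [hab, mul_comm]) hb1 (by omega)

open Polynomial in
theorem stmt_7 :
    Irreducible (432*X^8 + 448*X^7 - 852*X^6 + 588*X^5 - 72*X^4 - 504*X^3
      + 135*X^2 + 108*X - 27 : ℚ[X]) := by
  have hmap : fZ.map (Int.castRingHom ℚ) = (432*X^8 + 448*X^7 - 852*X^6 + 588*X^5 - 72*X^4
      - 504*X^3 + 135*X^2 + 108*X - 27 : ℚ[X]) := by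
    unfold fZ
    simp only [Polynomial.map_add, Polynomial.map_sub, Polynomial.map_mul, Polynomial.map_pow,
      Polynomial.map_X, Polynomial.map_ofNat]
  rw [← hmap]
  exact (Polynomial.IsPrimitive.Int.irreducible_iff_irreducible_map_cast fZ_primitive).mp fZ_irreducible
end
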